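/- Let w be a standard Brownian motion, T > 0, 0 = t_0 < t_1 < ... < t_N = T a partition with mesh δ = max_k (t_{k+1} - t_k), and define d_t = max{t_k : t_k ≤ t}. Then there is an absolute constant C (depending only on T) such that E[ sup_{t∈[0,T]} (w_t - w_{d_t})² ] ≤ C δ log(1/δ) for all δ ≤ 1/2. -/

import Mathlib

open MeasureTheory ProbabilityTheory Set

/-- A standard one-dimensional Brownian motion on `[0,∞)`. -/
def IsStdBrownianMotion {Ω : Type*} [MeasurableSpace Ω] (μ : Measure Ω)
    (w : ℝ → Ω → ℝ) : Prop :=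
  (∀ t, Measurable (w t)) ∧
  (∀ᵐ ω ∂μ, w 0 ω = 0 ∧ Continuous fun t => w t ω) ∧
  (∀ s t : ℝ, 0 ≤ s → s ≤ t →
    μ.map (fun ω => w t ω - w s ω) = gaussianReal 0 (Real.toNNReal (t - s))) ∧
  (∀ (n : ℕ) (t : Fin (n + 1) → ℝ), Monotone t → (∀ i, 0 ≤ t i) →
    iIndepFun
      (fun (i : Fin n) (ω : Ω) => w (t i.succ) ω - w (t i.castSucc) ω) μ)

/-!
On a cell `[t_k, t_{k+1}]` of length `h ≤ δ`, Lévy's reflection inequality along finer and finer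
uniform grids, continuity of the paths and the Gaussian tail of `w_{t_{k+1}} - w_{t_k}` give
`P(sup_{cell} |w_s - w_{t_k}| > a) ≤ 4 exp(-a² / (2h))`. A union bound over the cells and the
layer-cake formula, with the integral cut at `λ₀ = 2 δ log(1/δ)`, bound the expectation by
`λ₀ + ∑_k 8 h_k exp(-λ₀ / (2 h_k)) ≤ 2 δ log(1/δ) + 8 δ T`.
-/

open Real Filter
open scoped ENNReal NNReal

section Gaussian

variable {Ω : Type*} [MeasurableSpace Ω] {μ : Measure Ω} {X : Ω → ℝ} {v : ℝ≥0}

lemma hasSubgaussianMGF_of_hasLaw_gaussianReal (hX : HasLaw X (gaussianReal 0 v) μ) :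
    HasSubgaussianMGF X v μ where
  integrable_exp_mul t := by
    have := integrable_exp_mul_gaussianReal (μ := 0) (v := v) t
    rw [← hX.map_eq] at this
    exact (integrable_map_measure (by fun_prop) hX.aemeasurable).1 this
  mgf_le t := by rw [mgf_gaussianReal hX.map_eq]; simp

lemma measure_ge_le_exp_of_hasLaw_gaussianReal (hX : HasLaw X (gaussianReal 0 v) μ)
    {ε : ℝ} (hε : 0 ≤ ε) :
    μ {ω | ε ≤ X ω} ≤ ENNReal.ofReal (exp (-ε ^ 2 / (2 * v))) := by
  have := hX.isProbabilityMeasure_iff.2 inferInstance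
  rw [← ofReal_measureReal]
  exact ENNReal.ofReal_le_ofReal
    ((hasSubgaussianMGF_of_hasLaw_gaussianReal hX).measure_ge_le hε)

lemma inv_two_le_measure_le_zero_of_hasLaw_gaussianReal (hX : HasLaw X (gaussianReal 0 v) μ) :
    2⁻¹ ≤ μ {ω | X ω ≤ 0} := by
  have : IsProbabilityMeasure μ := hX.isProbabilityMeasure_iff.2 inferInstance
  have hsymm : μ {ω | 0 ≤ X ω} = μ {ω | X ω ≤ 0} := by
    have hneg : HasLaw (-X) (gaussianReal 0 v) μ := by simpa using gaussianReal_neg hX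
    rw [hX.measure_eq (p := (0 ≤ ·)) measurableSet_Ici,
      ← hneg.measure_eq (p := (0 ≤ ·)) measurableSet_Ici]
    simp
  have hcover : 1 ≤ μ {ω | 0 ≤ X ω} + μ {ω | X ω ≤ 0} := by
    rw [← measure_univ (μ := μ)]
    exact (measure_mono fun ω _ => le_total 0 (X ω)).trans (measure_union_le _ _)
  rw [hsymm, ← two_mul] at hcover
  exact (ENNReal.inv_le_iff_le_mul (by simp) (by simp)).2 hcover

lemma inv_two_le_measure_nonneg_of_hasLaw_gaussianReal (hX : HasLaw X (gaussianReal 0 v) μ) :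
    2⁻¹ ≤ μ {ω | 0 ≤ X ω} := by
  simpa using inv_two_le_measure_le_zero_of_hasLaw_gaussianReal
    (X := -X) (by simpa using gaussianReal_neg hX)

end Gaussian

section Reflection

lemma measure_le_two_mul_measure_inter_of_indep {Ω : Type*} {m₁ m₂ mΩ : MeasurableSpace Ω}
    {μ : Measure Ω} (h : Indep m₁ m₂ μ) {A B : Set Ω} (hA : MeasurableSet[m₁] A)
    (hB : MeasurableSet[m₂] B) (hB_half : 2⁻¹ ≤ μ B) : μ A ≤ 2 * μ (A ∩ B) := by
  rw [(h.indepSet_of_measurableSet hA hB).measure_inter_eq_mul]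
  calc μ A = 2 * (2⁻¹ * μ A) := by
        rw [← mul_assoc, ENNReal.mul_inv_cancel two_ne_zero ENNReal.ofNat_ne_top, one_mul]
    _ ≤ 2 * (μ A * μ B) := by rw [mul_comm (2⁻¹ : ℝ≥0∞)]; gcongr

variable {Ω : Type*} {mΩ : MeasurableSpace Ω} {μ : Measure Ω} {n : ℕ} {Y : Fin (n + 1) → Ω → ℝ}

abbrev incrementSigma (Y : Fin (n + 1) → Ω → ℝ) (S : Set (Fin n)) : MeasurableSpace Ω :=
  ⨆ i ∈ S, MeasurableSpace.comap (fun ω => Y i.succ ω - Y i.castSucc ω) inferInstance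

lemma incrementSigma_le (hY : ∀ k, Measurable (Y k)) (S : Set (Fin n)) :
    incrementSigma Y S ≤ mΩ :=
  iSup₂_le fun i _ => ((hY i.succ).sub (hY i.castSucc)).comap_le

lemma measurable_increment_incrementSigma {S : Set (Fin n)} {i : Fin n} (hi : i ∈ S) :
    Measurable[incrementSigma Y S] fun ω => Y i.succ ω - Y i.castSucc ω :=
  (Measurable.of_comap_le le_rfl).mono
    (le_iSup₂ (f := fun i (_ : i ∈ S) =>
      MeasurableSpace.comap (fun ω => Y i.succ ω - Y i.castSucc ω) inferInstance) i hi) le_rfl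

lemma measurable_sub_zero_incrementSigma_lt {j k : Fin (n + 1)} (hkj : k ≤ j) :
    Measurable[incrementSigma Y {i | i.castSucc < j}] fun ω => Y k ω - Y 0 ω := by
  induction k using Fin.induction with
  | zero => simp
  | succ k ih =>
    have hk : k.castSucc < j := k.castSucc_lt_succ.trans_le hkj
    convert (ih hk.le).add (measurable_increment_incrementSigma (Y := Y) hk) using 1
    ext ω
    simp

lemma measurable_last_sub_incrementSigma_le {j k : Fin (n + 1)} (hjk : j ≤ k) :
    Measurable[incrementSigma Y {i | j ≤ i.castSucc}] fun ω => Y (Fin.last n) ω - Y k ω := by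
  induction k using Fin.reverseInduction with
  | last => simp
  | cast k ih =>
    convert (ih (hjk.trans k.castSucc_lt_succ.le)).add
      (measurable_increment_incrementSigma (Y := Y) (S := {i | j ≤ i.castSucc}) hjk) using 1
    ext ω
    simp

/-- Lévy's reflection inequality: whether `Y` first climbs `a` above `Y 0` at time `j` is
independent of the increment after `j`, which is nonnegative with probability at least `1/2`. -/
theorem measure_exists_le_sub_le_two_mul (hY : ∀ k, Measurable (Y k))
    (hind : iIndepFun (fun (i : Fin n) ω => Y i.succ ω - Y i.castSucc ω) μ)
    (hhalf : ∀ j, 2⁻¹ ≤ μ {ω | Y j ω ≤ Y (Fin.last n) ω}) (a : ℝ) :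
    μ {ω | ∃ j, a ≤ Y j ω - Y 0 ω} ≤ 2 * μ {ω | a ≤ Y (Fin.last n) ω - Y 0 ω} := by
  set C : Fin (n + 1) → Set Ω := fun j => {ω | a ≤ Y j ω - Y 0 ω}
  set B : Fin (n + 1) → Set Ω := fun j => {ω | Y j ω ≤ Y (Fin.last n) ω}
  have hD : ∀ j, MeasurableSet[incrementSigma Y {i | i.castSucc < j}] (disjointed C j) := by
    intro j
    rw [disjointed_eq_inter_compl]
    refine (measurableSet_le measurable_const (measurable_sub_zero_incrementSigma_lt le_rfl)).inter
      (MeasurableSet.iInter fun i => MeasurableSet.iInter fun hij => MeasurableSet.compl ?_)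
    exact measurableSet_le measurable_const (measurable_sub_zero_incrementSigma_lt hij.le)
  have hB : ∀ j, MeasurableSet[incrementSigma Y {i | j ≤ i.castSucc}] (B j) := fun j => by
    simpa [B] using measurableSet_le (measurable_const (a := (0 : ℝ)))
      (measurable_last_sub_incrementSigma_le (Y := Y) (le_refl j))
  have hDm : ∀ j, MeasurableSet (disjointed C j) := fun j => incrementSigma_le hY _ _ (hD j)
  have hBm : ∀ j, MeasurableSet (B j) := fun j => incrementSigma_le hY _ _ (hB j)
  have hsplit : ∀ j, μ (disjointed C j) ≤ 2 * μ (disjointed C j ∩ B j) := fun j =>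
    measure_le_two_mul_measure_inter_of_indep
      (indep_iSup_of_disjoint (fun i : Fin n => ((hY i.succ).sub (hY i.castSucc)).comap_le)
        hind.iIndep (disjoint_left.2 fun i (hi : i.castSucc < j) (hi' : j ≤ i.castSucc) =>
          hi'.not_gt hi))
      (hD j) (hB j) (hhalf j)
  have hreach : (⋃ j, disjointed C j ∩ B j) ⊆ {ω | a ≤ Y (Fin.last n) ω - Y 0 ω} := by
    simp only [iUnion_subset_iff]
    rintro j ω ⟨hωC, hωB⟩
    have : a ≤ Y j ω - Y 0 ω := disjointed_subset C j hωC
    simp only [B, mem_ofPred_eq] at hωB ⊢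
    linarith
  calc μ {ω | ∃ j, a ≤ Y j ω - Y 0 ω} = μ (⋃ j, disjointed C j) := by
        rw [iUnion_disjointed]; congr 1; ext ω; simp [C]
    _ = ∑ j, μ (disjointed C j) := by
        rw [measure_iUnion (disjoint_disjointed C) hDm, tsum_fintype]
    _ ≤ ∑ j, 2 * μ (disjointed C j ∩ B j) := Finset.sum_le_sum fun j _ => hsplit j
    _ = 2 * μ (⋃ j, disjointed C j ∩ B j) := by
        rw [← Finset.mul_sum, measure_iUnion
          (fun i j hij => (disjoint_disjointed C hij).mono inter_subset_left inter_subset_left)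
          (fun j => (hDm j).inter (hBm j)), tsum_fintype]
    _ ≤ 2 * μ {ω | a ≤ Y (Fin.last n) ω - Y 0 ω} := by gcongr

theorem measure_exists_le_abs_sub_le_two_mul (hY : ∀ k, Measurable (Y k))
    (hind : iIndepFun (fun (i : Fin n) ω => Y i.succ ω - Y i.castSucc ω) μ)
    (hhalf_le : ∀ j, 2⁻¹ ≤ μ {ω | Y j ω ≤ Y (Fin.last n) ω})
    (hhalf_ge : ∀ j, 2⁻¹ ≤ μ {ω | Y (Fin.last n) ω ≤ Y j ω}) (a : ℝ) :
    μ {ω | ∃ j, a ≤ |Y j ω - Y 0 ω|} ≤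
      2 * μ {ω | a ≤ Y (Fin.last n) ω - Y 0 ω} + 2 * μ {ω | a ≤ Y 0 ω - Y (Fin.last n) ω} := by
  have hind_neg : iIndepFun (fun (i : Fin n) ω => -Y i.succ ω - -Y i.castSucc ω) μ := by
    convert hind.comp (fun _ x => -x) (fun _ => measurable_neg) using 2 with i
    ext ω
    simp only [Function.comp_apply]
    ring
  have hneg := measure_exists_le_sub_le_two_mul (Y := fun j ω => -Y j ω)
    (fun k => (hY k).neg) hind_neg (fun j => by simpa using hhalf_ge j) a
  calc μ {ω | ∃ j, a ≤ |Y j ω - Y 0 ω|}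
      ≤ μ ({ω | ∃ j, a ≤ Y j ω - Y 0 ω} ∪ {ω | ∃ j, a ≤ -Y j ω - -Y 0 ω}) := by
        refine measure_mono fun ω ⟨j, hj⟩ => ?_
        rcases le_abs'.1 hj with h | h
        · exact Or.inr ⟨j, by linarith⟩
        · exact Or.inl ⟨j, h⟩
    _ ≤ _ := (measure_union_le _ _).trans (add_le_add
        (measure_exists_le_sub_le_two_mul hY hind hhalf_le a)
        (by simpa [neg_sub_neg, le_sub_iff_add_le'] using hneg))

end Reflection

/-- Dividing by `n + 1` keeps `q` on the grid for every `n`, including `n = 0`. -/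
noncomputable def uniformGrid (p q : ℝ) (n : ℕ) (k : Fin (n + 2)) : ℝ := p + (q - p) * k / (n + 1)

section uniformGrid

variable {p q : ℝ}

@[simp] lemma uniformGrid_zero (n : ℕ) : uniformGrid p q n 0 = p := by simp [uniformGrid]

@[simp] lemma uniformGrid_last (n : ℕ) : uniformGrid p q n (Fin.last _) = q := by
  simp [uniformGrid]; field_simp; ring

lemma monotone_uniformGrid (hpq : p ≤ q) (n : ℕ) : Monotone (uniformGrid p q n) := by
  intro i j hij
  unfold uniformGrid
  gcongr
  exact_mod_cast hij

lemma exists_abs_uniformGrid_sub_le {s : ℝ} (hs : s ∈ Icc p q) (n : ℕ) :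
    ∃ k, |uniformGrid p q n k - s| ≤ (q - p) / (n + 1) := by
  rcases hs.1.eq_or_lt with rfl | hps
  · exact ⟨0, by simpa using div_nonneg (sub_nonneg.2 hs.2) (by positivity)⟩
  have hpq : 0 < q - p := by linarith [hs.2]
  set x := (s - p) * (n + 1) / (q - p)
  have hx : 0 ≤ x := by positivity
  have hxn : x ≤ n + 1 := by
    rw [div_le_iff₀ hpq]; nlinarith [hs.2]
  have hk : ⌊x⌋₊ < n + 2 := by
    have := Nat.floor_le_floor hxn
    rw [show ((n : ℝ) + 1) = ((n + 1 : ℕ) : ℝ) by push_cast; ring, Nat.floor_natCast] at this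
    omega
  refine ⟨⟨⌊x⌋₊, hk⟩, ?_⟩
  have h1 := Nat.floor_le hx
  have h2 := Nat.lt_floor_add_one x
  have hgrid : uniformGrid p q n ⟨⌊x⌋₊, hk⟩ = p + (q - p) / (n + 1) * ⌊x⌋₊ := by
    simp [uniformGrid]; ring
  have hs' : s = p + (q - p) / (n + 1) * x := by
    simp only [x]; field_simp; ring
  rw [hgrid, hs', abs_le]
  have hc : 0 < (q - p) / (n + 1) := by positivity
  constructor <;> nlinarith

lemma eventually_exists_lt_abs_uniformGrid_sub {f : ℝ → ℝ} (hf : Continuous f) {s a : ℝ}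
    (hs : s ∈ Icc p q) (ha : a < |f s - f p|) :
    ∀ᶠ n in atTop, ∃ k, a < |f (uniformGrid p q n k) - f p| := by
  have hopen : IsOpen {x | a < |f x - f p|} :=
    isOpen_lt continuous_const (hf.sub continuous_const).abs
  obtain ⟨ε, hε, hball⟩ := Metric.isOpen_iff.1 hopen s ha
  have hmesh : Tendsto (fun n : ℕ => (q - p) * (1 / ((n : ℝ) + 1))) atTop (nhds 0) := by
    simpa using tendsto_one_div_add_atTop_nhds_zero_nat.const_mul (q - p)
  filter_upwards [hmesh.eventually (gt_mem_nhds hε)] with n hn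
  obtain ⟨k, hk⟩ := exists_abs_uniformGrid_sub_le hs n
  refine ⟨k, hball ?_⟩
  rw [Metric.mem_ball, Real.dist_eq]
  rw [mul_one_div] at hn
  linarith

end uniformGrid

namespace IsStdBrownianMotion

variable {Ω : Type*} {mΩ : MeasurableSpace Ω} {μ : Measure Ω} {w : ℝ → Ω → ℝ}

lemma hasLaw_sub (hw : IsStdBrownianMotion μ w) {s t : ℝ} (hs : 0 ≤ s) (hst : s ≤ t) :
    HasLaw (fun ω => w t ω - w s ω) (gaussianReal 0 (t - s).toNNReal) μ :=
  ⟨((hw.1 t).sub (hw.1 s)).aemeasurable, hw.2.2.1 s t hs hst⟩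

lemma measure_exists_le_abs_sub_le (hw : IsStdBrownianMotion μ w) {n : ℕ}
    {u : Fin (n + 1) → ℝ} (hu : Monotone u) (hu0 : 0 ≤ u 0) {a : ℝ} (ha : 0 ≤ a) :
    μ {ω | ∃ j, a ≤ |w (u j) ω - w (u 0) ω|} ≤
      4 * ENNReal.ofReal (exp (-a ^ 2 / (2 * (u (Fin.last n) - u 0)))) := by
  have hnn : ∀ j, 0 ≤ u j := fun j => hu0.trans (hu (Fin.zero_le j))
  have hlaw : ∀ j, HasLaw (fun ω => w (u (Fin.last n)) ω - w (u j) ω)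
      (gaussianReal 0 (u (Fin.last n) - u j).toNNReal) μ :=
    fun j => hw.hasLaw_sub (hnn j) (hu (Fin.le_last j))
  have htail : ∀ X : Ω → ℝ, HasLaw X (gaussianReal 0 (u (Fin.last n) - u 0).toNNReal) μ →
      μ {ω | a ≤ X ω} ≤ ENNReal.ofReal (exp (-a ^ 2 / (2 * (u (Fin.last n) - u 0)))) := by
    intro X hX
    simpa [Real.coe_toNNReal _ (sub_nonneg.2 (hu (Fin.zero_le _)))] using
      measure_ge_le_exp_of_hasLaw_gaussianReal hX ha
  calc μ {ω | ∃ j, a ≤ |w (u j) ω - w (u 0) ω|}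
      ≤ 2 * μ {ω | a ≤ w (u (Fin.last n)) ω - w (u 0) ω}
        + 2 * μ {ω | a ≤ w (u 0) ω - w (u (Fin.last n)) ω} :=
        measure_exists_le_abs_sub_le_two_mul (Y := fun j => w (u j)) (fun j => hw.1 _)
          (hw.2.2.2 n u hu hnn)
          (fun j => by simpa using inv_two_le_measure_nonneg_of_hasLaw_gaussianReal (hlaw j))
          (fun j => by simpa using inv_two_le_measure_le_zero_of_hasLaw_gaussianReal (hlaw j)) a
    _ ≤ 2 * ENNReal.ofReal (exp (-a ^ 2 / (2 * (u (Fin.last n) - u 0))))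
        + 2 * ENNReal.ofReal (exp (-a ^ 2 / (2 * (u (Fin.last n) - u 0)))) := by
        gcongr
        · exact htail _ (hlaw 0)
        · exact htail _ (by simpa [Pi.neg_def] using gaussianReal_neg (hlaw 0))
    _ = _ := by ring

lemma measure_exists_mem_Icc_lt_abs_sub_le (hw : IsStdBrownianMotion μ w) {p q a : ℝ}
    (hp : 0 ≤ p) (hpq : p ≤ q) (ha : 0 ≤ a) :
    μ {ω | ∃ s ∈ Icc p q, a < |w s ω - w p ω|} ≤
      4 * ENNReal.ofReal (exp (-a ^ 2 / (2 * (q - p)))) := by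
  set A : ℕ → Set Ω := fun n => {ω | ∃ k, a ≤ |w (uniformGrid p q n k) ω - w p ω|}
  have hA : ∀ n, μ (A n) ≤ 4 * ENNReal.ofReal (exp (-a ^ 2 / (2 * (q - p)))) := fun n => by
    simpa using hw.measure_exists_le_abs_sub_le (monotone_uniformGrid hpq n) (by simpa using hp) ha
  have hsub : {ω | ∃ s ∈ Icc p q, a < |w s ω - w p ω|} ≤ᵐ[μ] ⋃ N, ⋂ n ≥ N, A n := by
    filter_upwards [hw.2.1] with ω hω ⟨s, hs, hlt⟩
    obtain ⟨N, hN⟩ := eventually_atTop.1 (eventually_exists_lt_abs_uniformGrid_sub hω.2 hs hlt)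
    refine mem_iUnion.2 ⟨N, mem_iInter₂.2 fun n hn => ?_⟩
    obtain ⟨k, hk⟩ := hN n hn
    exact ⟨k, hk.le⟩
  have hmono : Monotone fun N => ⋂ n ≥ N, A n :=
    fun N M hNM => biInter_mono (fun n (hn : M ≤ n) => hNM.trans hn) fun _ _ => subset_rfl
  calc μ {ω | ∃ s ∈ Icc p q, a < |w s ω - w p ω|} ≤ μ (⋃ N, ⋂ n ≥ N, A n) := measure_mono_ae hsub
    _ = ⨆ N, μ (⋂ n ≥ N, A n) := hmono.measure_iUnion
    _ ≤ _ := iSup_le fun N => (measure_mono (biInter_subset_of_mem le_rfl)).trans (hA N)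

end IsStdBrownianMotion

lemma lintegral_Ioi_ofReal_mul_exp_neg_div {b : ℝ} (hb : 0 < b) {c : ℝ} (hc : 0 ≤ c) (l₀ : ℝ) :
    ∫⁻ l in Ioi l₀, ENNReal.ofReal (c * exp (-l / b)) = ENNReal.ofReal (c * b * exp (-l₀ / b)) := by
  have hexp : ∀ l, exp (-l / b) = exp (-b⁻¹ * l) := fun l => by ring_nf
  simp_rw [hexp]
  rw [← ofReal_integral_eq_lintegral_ofReal
    ((exp_neg_integrableOn_Ioi l₀ (inv_pos.2 hb)).const_mul c) (ae_of_all _ fun l => by positivity),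
    integral_const_mul, integral_exp_mul_Ioi (neg_lt_zero.2 (inv_pos.2 hb))]
  congr 1
  field_simp

lemma integral_le_of_measure_lt_le_sum_exp {Ω ι : Type*} {mΩ : MeasurableSpace Ω}
    {μ : Measure Ω} [IsProbabilityMeasure μ] {F : Ω → ℝ} (hF : 0 ≤ F) (s : Finset ι) {c : ℝ}
    (hc : 0 ≤ c) {b : ι → ℝ} (hb : ∀ i ∈ s, 0 < b i) {l₀ : ℝ} (hl₀ : 0 ≤ l₀)
    (htail : ∀ l, l₀ < l → μ {ω | l < F ω} ≤ ∑ i ∈ s, ENNReal.ofReal (c * exp (-l / b i))) :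
    ∫ ω, F ω ∂μ ≤ l₀ + ∑ i ∈ s, c * b i * exp (-l₀ / b i) := by
  have hsum : 0 ≤ ∑ i ∈ s, c * b i * exp (-l₀ / b i) :=
    Finset.sum_nonneg fun i hi => by have := hb i hi; positivity
  by_cases hFm : AEStronglyMeasurable F μ
  swap
  · rw [integral_undef fun h => hFm h.1]
    positivity
  rw [integral_eq_lintegral_of_nonneg_ae (ae_of_all _ hF) hFm]
  refine ENNReal.toReal_le_of_le_ofReal (by positivity) ?_
  rw [lintegral_eq_lintegral_meas_lt μ (ae_of_all _ hF) hFm.aemeasurable,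
    ← Ioc_union_Ioi_eq_Ioi hl₀, lintegral_union measurableSet_Ioi (Ioc_disjoint_Ioi le_rfl)]
  have hlow : ∫⁻ l in Ioc 0 l₀, μ {ω | l < F ω} ≤ ENNReal.ofReal l₀ :=
    (setLIntegral_mono' measurableSet_Ioc fun _ _ => prob_le_one).trans (by simp)
  have hhigh : ∫⁻ l in Ioi l₀, μ {ω | l < F ω} ≤
      ∑ i ∈ s, ENNReal.ofReal (c * b i * exp (-l₀ / b i)) :=
    calc ∫⁻ l in Ioi l₀, μ {ω | l < F ω}
        ≤ ∫⁻ l in Ioi l₀, ∑ i ∈ s, ENNReal.ofReal (c * exp (-l / b i)) :=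
          setLIntegral_mono' measurableSet_Ioi htail
      _ = ∑ i ∈ s, ∫⁻ l in Ioi l₀, ENNReal.ofReal (c * exp (-l / b i)) :=
          lintegral_finsetSum _ fun i _ => by fun_prop
      _ = _ := Finset.sum_congr rfl fun i hi =>
          lintegral_Ioi_ofReal_mul_exp_neg_div (hb i hi) hc l₀
  calc _ ≤ ENNReal.ofReal l₀ + ∑ i ∈ s, ENNReal.ofReal (c * b i * exp (-l₀ / b i)) :=
        add_le_add hlow hhigh
    _ = _ := by
        rw [ENNReal.ofReal_add hl₀ hsum, ENNReal.ofReal_sum_of_nonneg fun i hi => by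
          have := hb i hi; positivity]

lemma Fin.sum_succ_sub_castSucc {M : Type*} [AddCommGroup M] {N : ℕ} (t : Fin (N + 1) → M) :
    ∑ k : Fin N, (t k.succ - t k.castSucc) = t (Fin.last N) - t 0 := by
  induction N with
  | zero => simp
  | succ N ih =>
    rw [Fin.sum_univ_castSucc]
    simp only [Fin.succ_castSucc]
    rw [ih fun k => t k.castSucc]
    simp

lemma Fin.exists_mem_Ico_castSucc_succ {α : Type*} [LinearOrder α] {N : ℕ}
    (t : Fin (N + 1) → α) {s : α} (hs : s ∈ Ico (t 0) (t (Fin.last N))) :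
    ∃ k : Fin N, s ∈ Ico (t k.castSucc) (t k.succ) := by
  have hne : (Finset.univ.filter fun j => s < t j).Nonempty := ⟨Fin.last N, by simpa using hs.2⟩
  set j := (Finset.univ.filter fun j => s < t j).min' hne
  have hj : s < t j := by simpa using Finset.min'_mem _ hne
  have hj0 : j ≠ 0 := by
    rintro h
    rw [h] at hj
    exact hj.not_ge hs.1
  refine ⟨j.pred hj0, not_lt.1 fun h => ?_, by simpa using hj⟩
  have hle : j ≤ (j.pred hj0).castSucc := Finset.min'_le _ _ (by simpa using h)
  exact hle.not_gt (by simpa using (j.pred hj0).castSucc_lt_succ)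

lemma Real.exists_mem_lt_of_lt_biSup {α : Type*} {S : Set α} {g : α → ℝ} {l : ℝ} (hl : 0 ≤ l)
    (h : l < ⨆ x ∈ S, g x) : ∃ x ∈ S, l < g x := by
  by_contra! hle
  exact h.not_ge (Real.iSup_le (fun x => Real.iSup_le (fun hx => hle x hx) hl) hl)

lemma eq_castSucc_of_mem_Ico {α : Type*} [LinearOrder α] {N : ℕ} {t : Fin (N + 1) → α}
    (hmono : Monotone t) {x s : α}
    (hx : ∃ k, x = t k ∧ t k ≤ s ∧ ∀ j, t j ≤ s → t j ≤ t k) {k : Fin N}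
    (hs : s ∈ Ico (t k.castSucc) (t k.succ)) : x = t k.castSucc := by
  obtain ⟨k₀, rfl, hk₀s, hmax⟩ := hx
  refine le_antisymm ?_ (hmax _ hs.1)
  rcases le_or_gt k₀ k.castSucc with h | h
  · exact hmono h
  · exact absurd ((hmono (Fin.castSucc_lt_iff_succ_le.1 h)).trans hk₀s) (not_le.2 hs.2)

lemma IsStdBrownianMotion.measure_lt_biSup_sq_le {Ω : Type*} {mΩ : MeasurableSpace Ω}
    {μ : Measure Ω} {w : ℝ → Ω → ℝ} (hw : IsStdBrownianMotion μ w) {T : ℝ} {N : ℕ}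
    {t : Fin (N + 1) → ℝ} (ht0 : t 0 = 0) (htN : t (Fin.last N) = T) (hmono : Monotone t)
    {d : ℝ → ℝ} (hd : ∀ s ∈ Icc (0 : ℝ) T, ∃ k : Fin (N + 1),
      d s = t k ∧ t k ≤ s ∧ ∀ j : Fin (N + 1), t j ≤ s → t j ≤ t k) {l : ℝ} (hl : 0 ≤ l) :
    μ {ω | l < ⨆ s ∈ Icc (0 : ℝ) T, (w s ω - w (d s) ω) ^ 2} ≤
      ∑ k ∈ Finset.univ.filter (fun k : Fin N => t k.castSucc < t k.succ),
        ENNReal.ofReal (4 * exp (-l / (2 * (t k.succ - t k.castSucc)))) := by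
  set cells := Finset.univ.filter (fun k : Fin N => t k.castSucc < t k.succ)
  have hsub : {ω | l < ⨆ s ∈ Icc (0 : ℝ) T, (w s ω - w (d s) ω) ^ 2} ⊆
      ⋃ k ∈ cells,
        {ω | ∃ s ∈ Icc (t k.castSucc) (t k.succ), √l < |w s ω - w (t k.castSucc) ω|} := by
    intro ω hω
    obtain ⟨s, hs, hlt⟩ := Real.exists_mem_lt_of_lt_biSup hl hω
    have hsT : s < T := by
      refine hs.2.lt_of_ne fun hsT => ?_
      obtain ⟨k, hdk, hks, hmax⟩ := hd s hs
      have hds : d s = s := hdk.trans (le_antisymm hks (hsT ▸ htN ▸ hmax _ (htN.trans hsT.symm).le))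
      rw [hds, sub_self] at hlt
      linarith
    obtain ⟨k, hk⟩ := Fin.exists_mem_Ico_castSucc_succ t (s := s) ⟨ht0 ▸ hs.1, htN ▸ hsT⟩
    rw [eq_castSucc_of_mem_Ico hmono (hd s hs) hk] at hlt
    refine mem_biUnion (x := k) (by simpa [cells] using hk.1.trans_lt hk.2)
      ⟨s, Ico_subset_Icc_self hk, ?_⟩
    rw [← Real.sqrt_sq_eq_abs]
    exact Real.sqrt_lt_sqrt hl hlt
  refine (measure_mono hsub).trans ((measure_biUnion_finset_le _ _).trans
    (Finset.sum_le_sum fun k _ => ?_))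
  have h := hw.measure_exists_mem_Icc_lt_abs_sub_le (ht0 ▸ hmono (Fin.zero_le k.castSucc))
    (hmono k.castSucc_lt_succ.le) (Real.sqrt_nonneg l)
  rwa [sq_sqrt hl, ← ENNReal.ofReal_ofNat 4, ← ENNReal.ofReal_mul (by norm_num)] at h

lemma sum_mul_exp_neg_div_le_of_mesh_le {N : ℕ} {t : Fin (N + 1) → ℝ} (hmono : Monotone t)
    {δ : ℝ} (hδ : 0 < δ) (hδ1 : δ ≤ 1) (hmesh : ∀ k : Fin N, t k.succ - t k.castSucc ≤ δ) :
    ∑ k ∈ Finset.univ.filter (fun k : Fin N => t k.castSucc < t k.succ),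
        4 * (2 * (t k.succ - t k.castSucc)) *
          exp (-(2 * δ * log (1 / δ)) / (2 * (t k.succ - t k.castSucc))) ≤
      8 * δ * (t (Fin.last N) - t 0) := by
  have hL : 0 ≤ log (1 / δ) := log_nonneg (by rw [le_div_iff₀ hδ]; linarith)
  have hcell : ∀ k ∈ Finset.univ.filter (fun k : Fin N => t k.castSucc < t k.succ),
      4 * (2 * (t k.succ - t k.castSucc)) *
          exp (-(2 * δ * log (1 / δ)) / (2 * (t k.succ - t k.castSucc))) ≤
        8 * δ * (t k.succ - t k.castSucc) := by
    intro k hk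
    have hh : 0 < t k.succ - t k.castSucc := by simpa using hk
    have hexp : exp (-(2 * δ * log (1 / δ)) / (2 * (t k.succ - t k.castSucc))) ≤ δ :=
      calc exp (-(2 * δ * log (1 / δ)) / (2 * (t k.succ - t k.castSucc)))
          ≤ exp (-log (1 / δ)) := by
            rw [exp_le_exp, neg_div, neg_le_neg_iff, le_div_iff₀ (by positivity)]
            nlinarith [hmesh k]
        _ = δ := by simp [exp_log hδ]
    nlinarith
  calc _ ≤ ∑ k ∈ Finset.univ.filter (fun k : Fin N => t k.castSucc < t k.succ),
          8 * δ * (t k.succ - t k.castSucc) := Finset.sum_le_sum hcell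
    _ ≤ ∑ k : Fin N, 8 * δ * (t k.succ - t k.castSucc) :=
        Finset.sum_le_sum_of_subset_of_nonneg (Finset.filter_subset _ _) fun k _ _ =>
          mul_nonneg (by positivity) (sub_nonneg.2 (hmono k.castSucc_lt_succ.le))
    _ = 8 * δ * (t (Fin.last N) - t 0) := by rw [← Finset.mul_sum, Fin.sum_succ_sub_castSucc]

theorem stmt_16 (T : ℝ) (hT : 0 < T) :
    ∃ C : ℝ, 0 < C ∧
      ∀ (Ω : Type) (_ : MeasurableSpace Ω) (μ : Measure Ω), IsProbabilityMeasure μ →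
      ∀ (w : ℝ → Ω → ℝ), IsStdBrownianMotion μ w →
      ∀ (N : ℕ) (t : Fin (N + 1) → ℝ) (δ : ℝ),
        t 0 = 0 → t (Fin.last N) = T → Monotone t →
        (∀ k : Fin N, t k.succ - t k.castSucc ≤ δ) → 0 < δ → δ ≤ 1 / 2 →
        ∀ d : ℝ → ℝ,
          (∀ s ∈ Icc (0:ℝ) T, ∃ k : Fin (N + 1),
            d s = t k ∧ t k ≤ s ∧ ∀ j : Fin (N + 1), t j ≤ s → t j ≤ t k) →
          ∫ ω, (⨆ s ∈ Icc (0:ℝ) T, (w s ω - w (d s) ω) ^ 2) ∂μ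
            ≤ C * δ * Real.log (1 / δ) := by
  have hlog2 : 0 < log 2 := log_pos one_lt_two
  refine ⟨2 + 8 * T / log 2, by positivity, ?_⟩
  intro Ω _ μ _ w hw N t δ ht0 htN hmono hmesh hδ hδ2 d hd
  have hL : log 2 ≤ log (1 / δ) := log_le_log two_pos (by rw [le_div_iff₀ hδ]; linarith)
  have hLpos : 0 < log (1 / δ) := hlog2.trans_le hL
  -- cutting the layer-cake integral at `2 δ log (1 / δ)` makes every exponential tail at most `δ`
  calc ∫ ω, (⨆ s ∈ Icc (0:ℝ) T, (w s ω - w (d s) ω) ^ 2) ∂μ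
      ≤ 2 * δ * log (1 / δ) +
          ∑ k ∈ Finset.univ.filter (fun k : Fin N => t k.castSucc < t k.succ),
            4 * (2 * (t k.succ - t k.castSucc)) *
              exp (-(2 * δ * log (1 / δ)) / (2 * (t k.succ - t k.castSucc))) :=
        integral_le_of_measure_lt_le_sum_exp
          (fun ω => Real.iSup_nonneg fun s => Real.iSup_nonneg fun _ => sq_nonneg _) _
          (by norm_num) (fun k hk => by simpa using hk) (by positivity)
          (fun l hl => hw.measure_lt_biSup_sq_le ht0 htN hmono hd
            ((by positivity : (0 : ℝ) ≤ 2 * δ * log (1 / δ)).trans hl.le))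
    _ ≤ 2 * δ * log (1 / δ) + 8 * δ * T := by
        gcongr
        simpa [htN, ht0] using sum_mul_exp_neg_div_le_of_mesh_le hmono hδ (by linarith) hmesh
    _ ≤ (2 + 8 * T / log 2) * δ * log (1 / δ) := by
        have : 8 * δ * T ≤ 8 * T / log 2 * δ * log (1 / δ) := by
          rw [div_mul_eq_mul_div, div_mul_eq_mul_div, le_div_iff₀ hlog2]
          nlinarith [mul_le_mul_of_nonneg_left hL (by positivity : 0 ≤ 8 * T * δ)]
        nlinarith
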